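/- arXiv:1302.5676 — 5 statements merged into one kernel-verified Lean document; each statement's English description precedes it below -/
import Mathlib

section
/- Let Z be an infinite set of finite subsets of ℕ such that every n ∈ ℕ belongs to only finitely many elements of Z. Then there exist an infinite subset Z' ⊆ Z, a strictly increasing sequence (m_k) of natural numbers, and a partition of Z' into finite nonempty pieces Z_k such that each z ∈ Z_k satisfies z ∩ {m_n : n < ω} = {m_k}. -/
/-- If `Z` is an infinite set of finite subsets of ℕ such that every natural
number belongs to only finitely many elements of `Z`, then there is a strictly
increasing sequence `m` and pairwise disjoint finite nonempty pieces `Zk ⊆ Z`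
whose union `Z'` is an infinite subset of `Z`, such that every `z ∈ Zk k`
meets `{m n : n < ω}` exactly in `{m k}`. -/
theorem exists_partition_meeting_strictMono (Z : Set (Finset ℕ))
    (hZ : Z.Infinite) (hfin : ∀ n : ℕ, {z ∈ Z | n ∈ z}.Finite) :
    ∃ m : ℕ → ℕ, StrictMono m ∧
    ∃ Zk : ℕ → Finset (Finset ℕ),
      (∀ k, (Zk k).Nonempty) ∧
      (∀ k, ↑(Zk k) ⊆ Z) ∧
      (Pairwise fun k l => Disjoint (Zk k) (Zk l)) ∧
      (⋃ k, (Zk k : Set (Finset ℕ))).Infinite ∧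
      (∀ k, ∀ z ∈ Zk k, (↑z : Set ℕ) ∩ Set.range m = {m k}) := by
  classical
  have key : ∀ F : Finset ℕ, ∃ z, z ∈ Z ∧ z.Nonempty ∧ Disjoint z F := by
    intro F
    have hbig : ({z ∈ Z | ¬ Disjoint z F} ∪ {(∅ : Finset ℕ)}).Finite := by
      apply Set.Finite.union _ (Set.finite_singleton _)
      have hsub : {z ∈ Z | ¬ Disjoint z F} ⊆ ⋃ n ∈ (F : Set ℕ), {z ∈ Z | n ∈ z} := by
        intro z hz
        obtain ⟨hzZ, hnd⟩ := hz
        rw [Finset.not_disjoint_iff] at hnd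
        obtain ⟨n, hnz, hnF⟩ := hnd
        exact Set.mem_biUnion hnF ⟨hzZ, hnz⟩
      exact Set.Finite.subset (Set.Finite.biUnion F.finite_toSet fun n _ => hfin n) hsub
    obtain ⟨z, hzZ, hz⟩ := (hZ.diff hbig).nonempty
    simp only [Set.mem_union, Set.mem_setOf_eq, Set.mem_singleton_iff, not_or, not_and,
      not_not] at hz
    exact ⟨z, hzZ, Finset.nonempty_iff_ne_empty.mpr hz.2, hz.1 hzZ⟩
  choose zf hzfZ hzfne hzfd using key
  let F : ℕ → Finset ℕ := fun k => Nat.rec ∅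
    (fun _ Fk => Fk ∪ Finset.range ((zf Fk).min' (hzfne Fk) + 1)
      ∪ ((hfin ((zf Fk).min' (hzfne Fk))).toFinset.biUnion id)) k
  let m : ℕ → ℕ := fun k => (zf (F k)).min' (hzfne (F k))
  have hFsucc : ∀ k, F (k+1) = F k ∪ Finset.range (m k + 1)
      ∪ ((hfin (m k)).toFinset.biUnion id) := fun k => rfl
  have hmono : Monotone F := by
    apply monotone_nat_of_le_succ
    intro k
    rw [hFsucc]
    exact Finset.subset_union_left.trans Finset.subset_union_left
  have hmem : ∀ k, m k ∈ zf (F k) := fun k => Finset.min'_mem _ _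
  have hmnot : ∀ k, m k ∉ F k := fun k => Finset.disjoint_left.mp (hzfd (F k)) (hmem k)
  have hmF : ∀ k, m k ∈ F (k+1) := by
    intro k
    rw [hFsucc]
    exact Finset.mem_union_left _ (Finset.mem_union_right _
      (Finset.mem_range.mpr (Nat.lt_succ_self _)))
  have hsm : StrictMono m := by
    apply strictMono_nat_of_lt_succ
    intro k
    by_contra h
    push_neg at h
    have : m (k+1) ∈ F (k+1) := by
      rw [hFsucc]
      exact Finset.mem_union_left _ (Finset.mem_union_right _
        (Finset.mem_range.mpr (Nat.lt_succ_of_le h)))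
    exact hmnot (k+1) this
  let Zk : ℕ → Finset (Finset ℕ) :=
    fun k => @Finset.filter _ (fun z => Disjoint z (F k)) (fun _ => Classical.propDecidable _) (hfin (m k)).toFinset
  have hmemZk : ∀ k z, z ∈ Zk k ↔ (z ∈ Z ∧ m k ∈ z) ∧ Disjoint z (F k) := by
    intro k z
    simp only [Zk, Finset.mem_filter, Set.Finite.mem_toFinset, Set.mem_setOf_eq]
  have hwit : ∀ k, zf (F k) ∈ Zk k := by
    intro k
    rw [hmemZk]
    exact ⟨⟨hzfZ (F k), hmem k⟩, hzfd (F k)⟩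
  -- main intersection property
  have hmain : ∀ k, ∀ z ∈ Zk k, (↑z : Set ℕ) ∩ Set.range m = {m k} := by
    intro k z hz
    rw [hmemZk] at hz
    obtain ⟨⟨hzZ, hmkz⟩, hdisj⟩ := hz
    have hzsub : z ⊆ F (k+1) := by
      intro x hx
      rw [hFsucc]
      refine Finset.mem_union_right _ ?_
      exact Finset.mem_biUnion.mpr ⟨z, (hfin (m k)).mem_toFinset.mpr ⟨hzZ, hmkz⟩, hx⟩
    ext x
    constructor
    · rintro ⟨hxz, ⟨l, rfl⟩⟩
      rcases lt_trichotomy l k with hl | hl | hl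
      · exfalso
        have : m l ∈ F k := hmono (Nat.succ_le_of_lt hl) (hmF l)
        exact Finset.disjoint_left.mp hdisj hxz this
      · simp [hl]
      · exfalso
        have : m l ∈ F l := hmono (Nat.succ_le_of_lt hl) (hzsub hxz)
        exact hmnot l this
    · rintro rfl
      exact ⟨hmkz, ⟨k, rfl⟩⟩
  have hdisjZk : Pairwise fun k l => Disjoint (Zk k) (Zk l) := by
    intro k l hkl
    rw [Finset.disjoint_left]
    intro z hzk hzl
    have h1 := hmain k z hzk
    have h2 := hmain l z hzl
    rw [h1] at h2
    exact hkl (hsm.injective (Set.singleton_eq_singleton_iff.mp h2))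
  refine ⟨m, hsm, Zk, fun k => ⟨zf (F k), hwit k⟩,
    fun k z hz => ((hmemZk k z).mp hz).1.1, hdisjZk, ?_, hmain⟩
  apply Set.infinite_of_injective_forall_mem (f := fun k => zf (F k))
  · intro k l hkl
    simp only at hkl
    by_contra hne
    exact Finset.disjoint_left.mp (hdisjZk hne) (hwit k) (hkl ▸ hwit l)
  · intro k
    exact Set.mem_iUnion.mpr ⟨k, hwit k⟩
end

section
/- Every nonprincipal strongly summable ultrafilter on the Boolean group [ω]^{<ω} (finite subsets of ℕ under symmetric difference) is sparse. -/
open scoped symmDiff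

set_option linter.unusedSectionVars false

local instance : Std.Commutative (symmDiff : Finset ℕ → Finset ℕ → Finset ℕ) := ⟨symmDiff_comm⟩
local instance : Std.Associative (symmDiff : Finset ℕ → Finset ℕ → Finset ℕ) := ⟨symmDiff_assoc⟩

/-- The set of finite symmetric differences of a sequence in the Boolean group. -/
def FDseq (x : ℕ → Finset ℕ) : Set (Finset ℕ) :=
  {s | ∃ a : Finset ℕ, a.Nonempty ∧ a.fold symmDiff ∅ x = s}

/-- An ultrafilter on the Boolean group is strongly summable if it has a base of
sets of finite symmetric differences. -/
def StronglySummable (p : Ultrafilter (Finset ℕ)) : Prop :=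
  ∀ A ∈ p, ∃ x : ℕ → Finset ℕ, FDseq x ∈ p ∧ FDseq x ⊆ A

/-- An ultrafilter on the Boolean group is sparse if for every member `A` there
are a sequence `x` with `FD(x) ⊆ A` and a subsequence `y = x ∘ g` with
`FD(y) ∈ p` which omits infinitely many terms of `x`. -/
def Sparse (p : Ultrafilter (Finset ℕ)) : Prop :=
  ∀ A ∈ p, ∃ x : ℕ → Finset ℕ, ∃ g : ℕ → ℕ, StrictMono g ∧
    (Set.range x \ Set.range (x ∘ g)).Infinite ∧
    FDseq x ⊆ A ∧ FDseq (x ∘ g) ∈ p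

lemma odd_card_symmDiff {α : Type*} [DecidableEq α] {s t : Finset α} :
    Odd ((s ∆ t).card) ↔ ¬ (Odd s.card ↔ Odd t.card) := by
  classical
  have hdisj : Disjoint (s ∆ t) (s ∩ t) := by
    rw [Finset.disjoint_left]
    intro a ha hb
    rw [Finset.mem_symmDiff] at ha
    rw [Finset.mem_inter] at hb
    tauto
  have hunion : (s ∆ t) ∪ (s ∩ t) = s ∪ t := by
    ext a
    simp only [Finset.mem_union, Finset.mem_symmDiff, Finset.mem_inter]
    tauto
  have h1 : (s ∆ t).card + (s ∩ t).card = (s ∪ t).card := by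
    rw [← Finset.card_union_of_disjoint hdisj, hunion]
  have h2 := Finset.card_union_add_card_inter s t
  rw [Nat.odd_iff, Nat.odd_iff, Nat.odd_iff]
  omega

lemma filter_symmDiff' {ι : Type*} [DecidableEq ι] (P : ι → Prop) [DecidablePred P]
    (a b : Finset ι) : (a ∆ b).filter P = (a.filter P) ∆ (b.filter P) := by
  ext i
  simp only [Finset.mem_filter, Finset.mem_symmDiff]
  tauto

section fdlemmas

variable {ι : Type*} [DecidableEq ι]

/-- Fold of symmetric differences over an index finset. -/
def fd (x : ι → Finset ℕ) (a : Finset ι) : Finset ℕ := a.fold symmDiff ∅ x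

lemma FDseq_eq (x : ℕ → Finset ℕ) : FDseq x = {s | ∃ a : Finset ℕ, a.Nonempty ∧ fd x a = s} := rfl

@[simp] lemma fd_empty (x : ι → Finset ℕ) : fd x ∅ = ∅ := rfl

lemma fd_insert {x : ι → Finset ℕ} {a : Finset ι} {i : ι} (h : i ∉ a) :
    fd x (insert i a) = x i ∆ fd x a := Finset.fold_insert h

@[simp] lemma fd_singleton (x : ι → Finset ℕ) (i : ι) : fd x {i} = x i := by
  have : fd x {i} = x i ∆ (∅ : Finset ℕ) := Finset.fold_singleton
  simpa [symmDiff] using this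

lemma mem_fd {x : ι → Finset ℕ} {a : Finset ι} {q : ℕ} :
    q ∈ fd x a ↔ Odd ((a.filter (fun i => q ∈ x i)).card) := by
  classical
  induction a using Finset.induction_on with
  | empty => simp [fd]
  | @insert i a hi ih =>
    rw [fd_insert hi, Finset.mem_symmDiff, Finset.filter_insert]
    by_cases hq : q ∈ x i
    · rw [if_pos hq, Finset.card_insert_of_notMem (fun hmem => hi (Finset.mem_filter.1 hmem).1)]
      simp only [hq, true_and, not_true, false_and, or_false, ih, Nat.odd_add_one, not_not]
      tauto
    · rw [if_neg hq]
      simp only [hq, false_and, false_or, ih]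
      tauto

lemma fd_symmDiff (x : ι → Finset ℕ) (a b : Finset ι) :
    fd x (a ∆ b) = fd x a ∆ fd x b := by
  classical
  ext q
  rw [Finset.mem_symmDiff]
  simp only [mem_fd]
  rw [filter_symmDiff', odd_card_symmDiff]
  tauto

lemma fd_union_of_disjoint {x : ι → Finset ℕ} {a b : Finset ι} (h : Disjoint a b) :
    fd x (a ∪ b) = fd x a ∆ fd x b := by
  rw [← fd_symmDiff, h.symmDiff_eq_sup]; rfl

lemma fd_comp {z : ℕ → Finset ℕ} {x : ι → Finset ℕ} {c : ι → Finset ℕ} {a : Finset ι}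
    (h : ∀ i ∈ a, x i = fd z (c i)) : fd x a = fd z (fd c a) := by
  classical
  induction a using Finset.induction_on with
  | empty => simp
  | @insert i a hi ih =>
    rw [fd_insert hi, fd_insert hi, fd_symmDiff, h i (Finset.mem_insert_self i a),
      ih (fun j hj => h j (Finset.mem_insert_of_mem hj))]

lemma fd_ptwise (x₁ x₂ : ι → Finset ℕ) (a : Finset ι) :
    fd (fun i => x₁ i ∆ x₂ i) a = fd x₁ a ∆ fd x₂ a := by
  classical
  ext q
  rw [Finset.mem_symmDiff]
  simp only [mem_fd]
  have heq : a.filter (fun i => q ∈ x₁ i ∆ x₂ i) =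
      (a.filter (fun i => q ∈ x₁ i)) ∆ (a.filter (fun i => q ∈ x₂ i)) := by
    ext i
    simp only [Finset.mem_filter, Finset.mem_symmDiff]
    tauto
  rw [heq, odd_card_symmDiff]
  tauto

lemma fd_image {κ : Type*} [DecidableEq κ] {x : ι → Finset ℕ} {f : κ → ι} {s : Finset κ}
    (hf : ∀ u ∈ s, ∀ v ∈ s, f u = f v → u = v) : fd x (s.image f) = fd (x ∘ f) s :=
  Finset.fold_image hf

lemma fd_singletons {m : ι → ℕ} (hm : Function.Injective m) (K : Finset ι) :
    fd (fun k => ({m k} : Finset ℕ)) K = K.image m := by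
  classical
  induction K using Finset.induction_on with
  | empty => simp
  | @insert k K hk ih =>
    rw [fd_insert hk, ih, Finset.image_insert]
    have hnot : m k ∉ K.image m := by
      intro hmem
      obtain ⟨j, hj, hje⟩ := Finset.mem_image.1 hmem
      exact hk ((hm hje) ▸ hj)
    ext q
    simp only [Finset.mem_symmDiff, Finset.mem_insert, Finset.mem_singleton]
    constructor
    · rintro (⟨rfl, -⟩ | ⟨h1, h2⟩)
      · exact Or.inl rfl
      · exact Or.inr h1
    · rintro (rfl | h)
      · exact Or.inl ⟨rfl, hnot⟩
      · exact Or.inr ⟨h, fun he => hnot (he ▸ h)⟩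

lemma fd_subset_biUnion {x : ι → Finset ℕ} {a : Finset ι} : fd x a ⊆ a.biUnion x := by
  classical
  intro q hq
  rw [mem_fd] at hq
  have hne : (a.filter (fun i => q ∈ x i)).Nonempty := by
    rw [Finset.nonempty_iff_ne_empty]
    intro h
    rw [h] at hq
    simp at hq
  obtain ⟨i, hi⟩ := hne
  rw [Finset.mem_filter] at hi
  exact Finset.mem_biUnion.2 ⟨i, hi.1, hi.2⟩

lemma fd_eq_of_symmDiff_empty {x : ι → Finset ℕ} {a b : Finset ι}
    (h : fd x (a ∆ b) = ∅) : fd x a = fd x b := by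
  rw [fd_symmDiff] at h
  exact symmDiff_eq_bot.1 h

end fdlemmas

section ultra

lemma ultra_compl_singleton (p : Ultrafilter (Finset ℕ)) (hnp : ∀ s : Finset ℕ, p ≠ pure s)
    (s₀ : Finset ℕ) : {t : Finset ℕ | t ≠ s₀} ∈ p := by
  by_contra h
  have h2 : {t : Finset ℕ | t ≠ s₀}ᶜ ∈ p := (Ultrafilter.compl_mem_iff_notMem.2 h)
  have h3 : ({s₀} : Set (Finset ℕ)) ∈ p := by
    convert h2 using 1
    ext t
    simp
  obtain ⟨x, hx, hpx⟩ := Ultrafilter.eq_pure_of_finite_mem (Set.finite_singleton s₀) h3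
  rw [Set.mem_singleton_iff] at hx
  exact hnp s₀ (hx ▸ hpx)

lemma ultra_infinite (p : Ultrafilter (Finset ℕ)) (hnp : ∀ s : Finset ℕ, p ≠ pure s)
    {S : Set (Finset ℕ)} (hS : S ∈ p) : S.Infinite := by
  by_contra h
  rw [Set.not_infinite] at h
  obtain ⟨x, _, hpx⟩ := Ultrafilter.eq_pure_of_finite_mem h hS
  exact hnp x hpx

end ultra

section inj

lemma fdz_inj {z : ℕ → Finset ℕ} (hEmp : (∅ : Finset ℕ) ∉ FDseq z) {a b : Finset ℕ}
    (hab : fd z a = fd z b) : a = b := by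
  by_contra hne
  have hd : a ∆ b ≠ ∅ := by
    intro h
    exact hne (symmDiff_eq_bot.1 (by rw [Finset.bot_eq_empty]; exact h))
  apply hEmp
  refine ⟨a ∆ b, Finset.nonempty_iff_ne_empty.2 hd, ?_⟩
  show fd z (a ∆ b) = ∅
  rw [fd_symmDiff, hab, symmDiff_self]
  rfl

lemma range_infinite_of_FDseq_mem (p : Ultrafilter (Finset ℕ))
    (hnp : ∀ s : Finset ℕ, p ≠ pure s) {w : ℕ → Finset ℕ} (hw : FDseq w ∈ p) :
    (Set.range w).Infinite := by
  by_contra h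
  rw [Set.not_infinite] at h
  set W₀ : Finset (Finset ℕ) := h.toFinset with hW₀
  have hmem : ∀ n, w n ∈ W₀ := fun n => h.mem_toFinset.2 ⟨n, rfl⟩
  have hsub : FDseq w ⊆ ↑(W₀.powerset.image (fun t => fd (id : Finset ℕ → Finset ℕ) t)) := by
    rintro s ⟨a, ha, rfl⟩
    have : ∀ a : Finset ℕ, ∃ b ⊆ W₀, fd w a = fd (id : Finset ℕ → Finset ℕ) b := by
      intro a
      induction a using Finset.induction_on with
      | empty => exact ⟨∅, Finset.empty_subset _, rfl⟩
      | @insert i a hi ih =>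
        obtain ⟨b, hb, heq⟩ := ih
        refine ⟨{w i} ∆ b, ?_, ?_⟩
        · intro t ht
          rw [Finset.mem_symmDiff] at ht
          rcases ht with ⟨ht, -⟩ | ⟨ht, -⟩
          · rw [Finset.mem_singleton] at ht; exact ht ▸ hmem i
          · exact hb ht
        · rw [fd_insert hi, heq, fd_symmDiff, fd_singleton]
          rfl
    obtain ⟨b, hb, heq⟩ := this a
    show fd w a ∈ _
    rw [Finset.coe_image]
    exact ⟨b, by simpa using hb, heq.symm⟩
  have hfin : (FDseq w).Finite := Set.Finite.subset (Finset.finite_toSet _) hsub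
  exact (ultra_infinite p hnp hw) hfin

end inj

section counting

/-- No set of "small-support" elements (support size ≤ 2 w.r.t. an independent sequence z)
belongs to a nonprincipal strongly summable ultrafilter. -/
lemma small_notMem (p : Ultrafilter (Finset ℕ)) (hnp : ∀ s : Finset ℕ, p ≠ pure s)
    (hss : StronglySummable p) {z : ℕ → Finset ℕ} (hEmp : (∅ : Finset ℕ) ∉ FDseq z) :
    {s : Finset ℕ | ∃ c : Finset ℕ, c.Nonempty ∧ c.card ≤ 2 ∧ fd z c = s} ∉ p := by
  intro hT2
  obtain ⟨w, hwp, hwT⟩ := hss _ hT2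
  have hrange : (Set.range w).Infinite := range_infinite_of_FDseq_mem p hnp hwp
  -- extract indices with pairwise distinct values
  have hj : ∃ j : ℕ → ℕ, Function.Injective (w ∘ j) := by
    set E := hrange.natEmbedding with hE
    have : ∀ k : ℕ, ∃ n : ℕ, w n = (E k : Finset ℕ) := fun k => (E k).2
    choose j hjs using this
    refine ⟨j, fun k k' hkk => ?_⟩
    apply E.injective
    apply Subtype.ext
    rw [← hjs k, ← hjs k']
    exact hkk
  obtain ⟨j, hjinj⟩ := hj
  -- supports of the selected terms
  have hterm : ∀ k : ℕ, w (j k) ∈ FDseq w := fun k => ⟨{j k}, Finset.singleton_nonempty _, by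
    show fd w {j k} = w (j k); rw [fd_singleton]⟩
  have : ∀ k : ℕ, ∃ c : Finset ℕ, c.Nonempty ∧ c.card ≤ 2 ∧ fd z c = w (j k) := by
    intro k
    exact hwT (hterm k)
  choose c hc1 hc2 hc3 using this
  -- all combos are small and nonempty
  have hcombo : ∀ e : Finset ℕ, e ⊆ Finset.range 13 → e.Nonempty →
      (fd c e).Nonempty ∧ (fd c e).card ≤ 2 := by
    intro e hesub hene
    have h1 : fd (w ∘ j) e = fd z (fd c e) := fd_comp (fun i _ => (hc3 i).symm)
    have h2 : fd w (e.image j) = fd (w ∘ j) e :=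
      fd_image (fun u _ v _ huv => hjinj (by simp [Function.comp, huv]))
    have h3 : fd w (e.image j) ∈ FDseq w :=
      ⟨e.image j, hene.image j, rfl⟩
    obtain ⟨c', hc'1, hc'2, hc'3⟩ := hwT h3
    have h4 : fd z c' = fd z (fd c e) := by rw [hc'3, h2, h1]
    have h5 : c' = fd c e := fdz_inj hEmp h4
    rw [← h5]
    exact ⟨hc'1, hc'2⟩
  -- injectivity of combos
  have hinj : ∀ e ∈ (Finset.range 13).powerset.erase ∅, ∀ e' ∈ (Finset.range 13).powerset.erase ∅,
      fd c e = fd c e' → e = e' := by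
    intro e he e' he' hee
    by_contra hne
    have hd : (e ∆ e').Nonempty := by
      rw [Finset.nonempty_iff_ne_empty]
      intro h
      exact hne (symmDiff_eq_bot.1 (by rw [Finset.bot_eq_empty]; exact h))
    have hsub : e ∆ e' ⊆ Finset.range 13 := by
      intro i hi
      rw [Finset.mem_symmDiff] at hi
      rcases hi with ⟨hi, -⟩ | ⟨hi, -⟩
      · exact (Finset.mem_powerset.1 (Finset.mem_of_mem_erase he)) hi
      · exact (Finset.mem_powerset.1 (Finset.mem_of_mem_erase he')) hi
    have := (hcombo _ hsub hd).1
    rw [fd_symmDiff, hee, symmDiff_self] at this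
    exact Finset.not_nonempty_empty this
  -- cardinality contradiction
  set U := (Finset.range 13).biUnion c with hU
  have hUcard : U.card ≤ 26 := by
    calc U.card ≤ ∑ i ∈ Finset.range 13, (c i).card := Finset.card_biUnion_le
    _ ≤ ∑ _i ∈ Finset.range 13, 2 := Finset.sum_le_sum (fun i _ => hc2 i)
    _ = 26 := by simp
  set 𝒮 := ((Finset.range 13).powerset.erase ∅).image (fd c) with h𝒮
  have hcard𝒮 : 𝒮.card = 2 ^ 13 - 1 := by
    rw [h𝒮, Finset.card_image_of_injOn hinj, Finset.card_erase_of_mem (by simp),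
      Finset.card_powerset, Finset.card_range]
  have hsub𝒮 : 𝒮 ⊆ U.powersetCard 1 ∪ U.powersetCard 2 := by
    intro s hs
    obtain ⟨e, he, rfl⟩ := Finset.mem_image.1 hs
    have hesub : e ⊆ Finset.range 13 := Finset.mem_powerset.1 (Finset.mem_of_mem_erase he)
    have hene : e.Nonempty := Finset.nonempty_iff_ne_empty.2 (Finset.ne_of_mem_erase he)
    obtain ⟨hne, hle⟩ := hcombo e hesub hene
    have hsubU : fd c e ⊆ U := by
      refine subset_trans fd_subset_biUnion ?_
      exact Finset.biUnion_subset_biUnion_of_subset_left c hesub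
    have hge : 1 ≤ (fd c e).card := Finset.card_pos.2 hne
    rw [Finset.mem_union, Finset.mem_powersetCard, Finset.mem_powersetCard]
    interval_cases h : (fd c e).card
    · exact Or.inl ⟨hsubU, rfl⟩
    · exact Or.inr ⟨hsubU, rfl⟩
  have hbound : 𝒮.card ≤ (U.powersetCard 1).card + (U.powersetCard 2).card :=
    le_trans (Finset.card_le_card hsub𝒮) (Finset.card_union_le _ _)
  rw [Finset.card_powersetCard, Finset.card_powersetCard] at hbound
  have h1 : U.card.choose 1 ≤ Nat.choose 26 1 := Nat.choose_le_choose 1 hUcard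
  have h2 : U.card.choose 2 ≤ Nat.choose 26 2 := Nat.choose_le_choose 2 hUcard
  rw [hcard𝒮] at hbound
  have : (26).choose 1 = 26 := by decide
  have : (26).choose 2 = 325 := by decide
  omega

end counting

section echelon

variable (V : Set (Finset ℕ))

/-- The set of pivots (maxima of members) of a collection of finsets. -/
def Piv : Set ℕ := {q | ∃ v ∈ V, v.max = (WithBot.some q)}

lemma max_eq_of_mem_le {v : Finset ℕ} {q : ℕ} (hq : q ∈ v) (hle : ∀ r ∈ v, r ≤ q) :
    v.max = (WithBot.some q) := by
  have hne : v.Nonempty := ⟨q, hq⟩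
  have h1 : v.max' hne = q := le_antisymm (Finset.max'_le v hne q hle) (Finset.le_max' v q hq)
  rw [← Finset.coe_max' hne, h1]

lemma piv_infinite (hVne : ∀ v ∈ V, v.Nonempty) (hVinf : V.Infinite) : (Piv V).Infinite := by
  by_contra h
  rw [Set.not_infinite] at h
  obtain ⟨N, hN⟩ := h.bddAbove
  have hsub : V ⊆ ↑((Finset.range (N + 1)).powerset) := by
    intro v hv
    rw [Finset.mem_coe, Finset.mem_powerset]
    intro r hr
    have hne := hVne v hv
    have hmax : v.max = (WithBot.some (v.max' hne)) := (Finset.coe_max' hne).symm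
    have hpiv : (v.max' hne) ∈ Piv V := ⟨v, hv, hmax⟩
    have h1 : r ≤ v.max' hne := Finset.le_max' v r hr
    have h2 : v.max' hne ≤ N := hN hpiv
    rw [Finset.mem_range]
    omega
  exact hVinf (Set.Finite.subset (Finset.finite_toSet _) hsub)

lemma echelon_exists (hVd : ∀ v ∈ V, ∀ w ∈ V, v ≠ w → v ∆ w ∈ V) :
    ∀ q ∈ Piv V, ∃ α, α ∈ V ∧ α.max = (WithBot.some q) ∧ ∀ r ∈ α, r ∈ Piv V → r = q := by
  classical
  intro q hq
  obtain ⟨v₀, hv₀, hmax₀⟩ := hq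
  have aux : ∀ k : ℕ, ∀ v, v ∈ V → v.max = (WithBot.some q) →
      (∀ r ∈ v, r ∈ Piv V → r ≠ q → r < k) →
      ∃ α, α ∈ V ∧ α.max = (WithBot.some q) ∧ ∀ r ∈ α, r ∈ Piv V → r = q := by
    intro k
    induction k using Nat.strong_induction_on with
    | _ k IH =>
      intro v hv hvmax hbound
      set B := v.filter (fun r => r ∈ Piv V ∧ r ≠ q) with hB
      by_cases hBe : B.Nonempty
      · -- strip the largest non-q pivot
        obtain ⟨m', hm'B, hm'ub⟩ : ∃ m', m' ∈ B ∧ ∀ r ∈ B, r ≤ m' :=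
          ⟨B.max' hBe, Finset.max'_mem B hBe, fun r hr => Finset.le_max' B r hr⟩
        rw [Finset.mem_filter] at hm'B
        obtain ⟨hm'v, hm'piv, hm'ne⟩ := hm'B
        have hm'k : m' < k := hbound m' hm'v hm'piv hm'ne
        have hm'q : m' < q :=
          lt_of_le_of_ne (Finset.le_max_of_eq hm'v hvmax) hm'ne
        obtain ⟨w, hw, hwmax⟩ := hm'piv
        have hvw : v ≠ w := by
          intro h
          apply hm'ne
          have hcast : (WithBot.some m') = (WithBot.some q) := by rw [← hwmax, ← h, hvmax]
          exact Option.some_inj.1 hcast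
        have hv' : v ∆ w ∈ V := hVd v hv w hw hvw
        have hqv : q ∈ v := Finset.mem_of_max hvmax
        have hqw : q ∉ w := by
          intro h
          have := Finset.le_max_of_eq h hwmax
          omega
        have hqv' : q ∈ v ∆ w := Finset.mem_symmDiff.2 (Or.inl ⟨hqv, hqw⟩)
        have hv'le : ∀ r ∈ v ∆ w, r ≤ q := by
          intro r hr
          rw [Finset.mem_symmDiff] at hr
          rcases hr with ⟨hr, -⟩ | ⟨hr, -⟩
          · exact Finset.le_max_of_eq hr hvmax
          · exact le_trans (Finset.le_max_of_eq hr hwmax) (le_of_lt hm'q)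
        have hv'max : (v ∆ w).max = (WithBot.some q) := max_eq_of_mem_le hqv' hv'le
        have hm'notv' : m' ∉ v ∆ w := by
          rw [Finset.mem_symmDiff]
          have hm'w : m' ∈ w := Finset.mem_of_max hwmax
          tauto
        have hbound' : ∀ r ∈ v ∆ w, r ∈ Piv V → r ≠ q → r < m' := by
          intro r hr hrpiv hrq
          have hrm' : r ≠ m' := fun h => hm'notv' (h ▸ hr)
          rw [Finset.mem_symmDiff] at hr
          rcases hr with ⟨hr, -⟩ | ⟨hr, -⟩
          · have h5 : r ≤ m' := hm'ub r (Finset.mem_filter.2 ⟨hr, hrpiv, hrq⟩)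
            omega
          · have := Finset.le_max_of_eq hr hwmax
            omega
        exact IH m' hm'k (v ∆ w) hv' hv'max hbound'
      · -- no other pivots: done
        refine ⟨v, hv, hvmax, ?_⟩
        intro r hr hrpiv
        by_contra hrq
        exact hBe ⟨r, Finset.mem_filter.2 ⟨hr, hrpiv, hrq⟩⟩
  apply aux (q + 1) v₀ hv₀ hmax₀
  intro r hr _ _
  have := Finset.le_max_of_eq hr hmax₀
  omega

lemma echelon_span (hVne : ∀ v ∈ V, v.Nonempty) (hVd : ∀ v ∈ V, ∀ w ∈ V, v ≠ w → v ∆ w ∈ V)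
    (α : ℕ → Finset ℕ) (hαV : ∀ q ∈ Piv V, α q ∈ V)
    (hαmax : ∀ q ∈ Piv V, (α q).max = (WithBot.some q)) :
    ∀ v ∈ V, ∃ E : Finset ℕ, E.Nonempty ∧ ↑E ⊆ Piv V ∧ fd α E = v := by
  classical
  have aux : ∀ n : ℕ, ∀ v, v ∈ V → v.max = (WithBot.some n) →
      ∃ E : Finset ℕ, E.Nonempty ∧ ↑E ⊆ Piv V ∧ (∀ r ∈ E, r ≤ n) ∧ fd α E = v := by
    intro n
    induction n using Nat.strong_induction_on with
    | _ n IH =>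
      intro v hv hvmax
      have hnpiv : n ∈ Piv V := ⟨v, hv, hvmax⟩
      by_cases hveq : v = α n
      · refine ⟨{n}, Finset.singleton_nonempty n, ?_, ?_, ?_⟩
        · intro r hr
          rw [Finset.coe_singleton, Set.mem_singleton_iff] at hr
          exact hr ▸ hnpiv
        · intro r hr
          rw [Finset.mem_singleton] at hr
          omega
        · rw [fd_singleton, hveq]
      · have hv' : v ∆ α n ∈ V := hVd v hv (α n) (hαV n hnpiv) hveq
        have hne' : (v ∆ α n).Nonempty := hVne _ hv'
        obtain ⟨m', hm'mem, hm'ub⟩ : ∃ m', m' ∈ v ∆ α n ∧ ∀ r ∈ v ∆ α n, r ≤ m' :=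
          ⟨(v ∆ α n).max' hne', Finset.max'_mem _ hne',
            fun r hr => Finset.le_max' _ r hr⟩
        have hm'max : (v ∆ α n).max = (WithBot.some m') := max_eq_of_mem_le hm'mem hm'ub
        have hnv : n ∈ v := Finset.mem_of_max hvmax
        have hnα : n ∈ α n := Finset.mem_of_max (hαmax n hnpiv)
        have hnnot : n ∉ v ∆ α n := by
          rw [Finset.mem_symmDiff]
          tauto
        have hm'lt : m' < n := by
          have hle : m' ≤ n := by
            rw [Finset.mem_symmDiff] at hm'mem
            rcases hm'mem with ⟨hr, -⟩ | ⟨hr, -⟩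
            · exact Finset.le_max_of_eq hr hvmax
            · exact Finset.le_max_of_eq hr (hαmax n hnpiv)
          have hm'n : m' ≠ n := fun h => hnnot (h ▸ hm'mem)
          omega
        obtain ⟨E', hE'ne, hE'piv, hE'le, hE'fd⟩ := IH m' hm'lt (v ∆ α n) hv' hm'max
        have hnE' : n ∉ E' := fun h => absurd (hE'le n h) (by omega)
        refine ⟨insert n E', Finset.insert_nonempty n E', ?_, ?_, ?_⟩
        · intro r hr
          rw [Finset.coe_insert, Set.mem_insert_iff] at hr
          rcases hr with rfl | hr
          · exact hnpiv
          · exact hE'piv hr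
        · intro r hr
          rw [Finset.mem_insert] at hr
          rcases hr with rfl | hr
          · omega
          · have := hE'le r hr; omega
        · rw [fd_insert hnE', hE'fd, symmDiff_comm v (α n), symmDiff_symmDiff_cancel_left]
  intro v hv
  have hne := hVne v hv
  have hvmax : v.max = (WithBot.some (v.max' hne)) := (Finset.coe_max' hne).symm
  obtain ⟨E, h1, h2, _, h4⟩ := aux (v.max' hne) v hv hvmax
  exact ⟨E, h1, h2, h4⟩

end echelon

/-- Every nonprincipal strongly summable ultrafilter on the Boolean group is sparse. -/
theorem stronglySummable_sparse (p : Ultrafilter (Finset ℕ))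
    (hnp : ∀ s : Finset ℕ, p ≠ pure s) (hss : StronglySummable p) :
    Sparse p := by
  classical
  intro A hA
  -- Step 1: remove the empty set from A
  have hA1 : (A ∩ {t : Finset ℕ | t ≠ ∅}) ∈ p :=
    Filter.inter_mem hA (ultra_compl_singleton p hnp ∅)
  obtain ⟨z, hzp, hzA⟩ := hss _ hA1
  have hEmp : (∅ : Finset ℕ) ∉ FDseq z := fun h => (hzA h).2 rfl
  -- Step 2: the small-support elements do not form a member of p
  have hT2 : {s : Finset ℕ | ∃ c : Finset ℕ, c.Nonempty ∧ c.card ≤ 2 ∧ fd z c = s} ∉ p :=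
    small_notMem p hnp hss hEmp
  have hS : (FDseq z ∩ {s : Finset ℕ | ∃ c : Finset ℕ, c.Nonempty ∧ c.card ≤ 2 ∧ fd z c = s}ᶜ) ∈ p :=
    Filter.inter_mem hzp (Ultrafilter.compl_mem_iff_notMem.2 hT2)
  obtain ⟨u, hup, huS⟩ := hss _ hS
  -- Step 3: supports of the terms of u
  have hd : ∀ n : ℕ, ∃ dn : Finset ℕ, dn.Nonempty ∧ fd z dn = u n := by
    intro n
    have hmem : u n ∈ FDseq z := (huS ⟨{n}, Finset.singleton_nonempty n, by
      show fd u {n} = u n; rw [fd_singleton]⟩).1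
    exact hmem
  choose d hd1 hd2 using hd
  -- the "span" of the supports
  set V : Set (Finset ℕ) := {v | ∃ e : Finset ℕ, e.Nonempty ∧ fd d e = v} with hV
  have hVfd : ∀ v ∈ V, fd z v ∈ FDseq z ∩
      {s : Finset ℕ | ∃ c : Finset ℕ, c.Nonempty ∧ c.card ≤ 2 ∧ fd z c = s}ᶜ := by
    rintro v ⟨e, he, rfl⟩
    have hcomp : fd u e = fd z (fd d e) := fd_comp (fun i _ => (hd2 i).symm)
    have : fd u e ∈ FDseq u := ⟨e, he, rfl⟩
    rw [hcomp] at this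
    exact huS this
  have hVne : ∀ v ∈ V, v.Nonempty := by
    intro v hv
    rw [Finset.nonempty_iff_ne_empty]
    rintro rfl
    exact hEmp (hVfd ∅ hv).1
  have hV3 : ∀ v ∈ V, 3 ≤ v.card := by
    intro v hv
    by_contra hlt
    exact (hVfd v hv).2 ⟨v, hVne v hv, by omega, rfl⟩
  have hVd : ∀ v ∈ V, ∀ w ∈ V, v ≠ w → v ∆ w ∈ V := by
    rintro v ⟨e, he, rfl⟩ w ⟨f, hf, rfl⟩ hvw
    have hef : e ≠ f := fun h => hvw (h ▸ rfl)
    have hd' : (e ∆ f).Nonempty := by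
      rw [Finset.nonempty_iff_ne_empty]
      intro h
      exact hef (symmDiff_eq_bot.1 (by rw [Finset.bot_eq_empty]; exact h))
    exact ⟨e ∆ f, hd', fd_symmDiff d e f⟩
  have hdinj : Function.Injective d := by
    intro n n' h
    by_contra hne
    have h2 : ({n, n'} : Finset ℕ).Nonempty := Finset.insert_nonempty _ _
    have h3 : fd d {n, n'} = ∅ := by
      have hnn : n ∉ ({n'} : Finset ℕ) := by simp [hne]
      rw [show ({n, n'} : Finset ℕ) = insert n {n'} from rfl, fd_insert hnn, fd_singleton, h,
        symmDiff_self]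
      rfl
    have : (∅ : Finset ℕ) ∈ V := ⟨{n, n'}, h2, h3⟩
    exact Finset.not_nonempty_empty (hVne ∅ this)
  have hVinf : V.Infinite := by
    apply Set.infinite_of_injective_forall_mem (f := d) hdinj
    intro n
    exact ⟨{n}, Finset.singleton_nonempty n, fd_singleton d n⟩
  -- Step 4: echelon basis
  have hPinf : (Piv V).Infinite := piv_infinite V hVne hVinf
  have hech : ∀ q : ℕ, ∃ αq : Finset ℕ, q ∈ Piv V →
      (αq ∈ V ∧ αq.max = (WithBot.some q) ∧ ∀ r ∈ αq, r ∈ Piv V → r = q) := by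
    intro q
    by_cases hq : q ∈ Piv V
    · obtain ⟨αq, h1, h2, h3⟩ := echelon_exists V hVd q hq
      exact ⟨αq, fun _ => ⟨h1, h2, h3⟩⟩
    · exact ⟨∅, fun h => absurd h hq⟩
  choose α hα using hech
  have hαV : ∀ q ∈ Piv V, α q ∈ V := fun q hq => (hα q hq).1
  have hαmax : ∀ q ∈ Piv V, (α q).max = (WithBot.some q) := fun q hq => (hα q hq).2.1
  have hαpiv : ∀ q ∈ Piv V, ∀ r ∈ α q, r ∈ Piv V → r = q := fun q hq => (hα q hq).2.2
  have hαq_mem : ∀ q ∈ Piv V, q ∈ α q := fun q hq => Finset.mem_of_max (hαmax q hq)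
  have hα3 : ∀ q ∈ Piv V, 3 ≤ (α q).card := fun q hq => hV3 _ (hαV q hq)
  have hspan := echelon_span V hVne hVd α hαV hαmax
  -- Step 5: the reduced lower parts
  set β : ℕ → Finset ℕ := fun q => (α q).erase q with hβdef
  have hβeq : ∀ q ∈ Piv V, β q = α q ∆ {q} := by
    intro q hq
    ext r
    rw [hβdef]
    simp only [Finset.mem_erase, Finset.mem_symmDiff, Finset.mem_singleton]
    constructor
    · rintro ⟨h1, h2⟩; exact Or.inl ⟨h2, h1⟩
    · rintro (⟨h1, h2⟩ | ⟨rfl, h2⟩)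
      · exact ⟨h2, h1⟩
      · exact absurd (hαq_mem _ hq) h2
  have hβdistinct : ∀ q ∈ Piv V, ∀ q' ∈ Piv V, β q = β q' → q = q' := by
    intro q hq q' hq' hβ
    by_contra hne
    have hαne : α q ≠ α q' := by
      intro h
      have : (WithBot.some q) = (WithBot.some q') := by rw [← hαmax q hq, h, hαmax q' hq']
      exact hne (Option.some_inj.1 this)
    have hmem : α q ∆ α q' ∈ V := hVd _ (hαV q hq) _ (hαV q' hq') hαne
    have hpair : α q ∆ α q' = {q, q'} := by
      have h1 : α q = insert q (β q) := (Finset.insert_erase (hαq_mem q hq)).symm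
      have h2 : α q' = insert q' (β q) := by
        rw [hβ]; exact (Finset.insert_erase (hαq_mem q' hq')).symm
      have hq1 : q ∉ β q := Finset.notMem_erase q _
      have hq2 : q' ∉ β q := by rw [hβ]; exact Finset.notMem_erase q' _
      rw [h1, h2]
      ext r
      simp only [Finset.mem_symmDiff, Finset.mem_insert, Finset.mem_singleton]
      constructor
      · rintro (⟨h3, h4⟩ | ⟨h3, h4⟩)
        · rcases h3 with rfl | h3
          · exact Or.inl rfl
          · exact absurd (Or.inr h3) h4
        · rcases h3 with rfl | h3
          · exact Or.inr rfl
          · exact absurd (Or.inr h3) h4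
      · rintro (rfl | rfl)
        · exact Or.inl ⟨Or.inl rfl, by rintro (rfl | h); exact hne rfl; exact hq1 h⟩
        · exact Or.inr ⟨Or.inl rfl, by rintro (rfl | h); exact hne rfl; exact hq2 h⟩
    have hcard : (α q ∆ α q').card = 2 := by
      rw [hpair]
      rw [Finset.card_insert_of_notMem (by simp [hne]), Finset.card_singleton]
    have := hV3 _ hmem
    omega
  -- Step 6: greedy choice of an independent subfamily of the β's
  set SPAN : Finset (Finset ℕ) → Finset (Finset ℕ) :=
    fun F => F.powerset.image (fun t => fd (id : Finset ℕ → Finset ℕ) t) with hSPAN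
  have hmem_span : ∀ (F : Finset (Finset ℕ)) (t : Finset ℕ), t ∈ F → t ∈ SPAN F := by
    intro F t ht
    rw [hSPAN]
    apply Finset.mem_image.2
    exact ⟨{t}, Finset.mem_powerset.2 (Finset.singleton_subset_iff.2 ht), fd_singleton _ _⟩
  have hstep : ∀ F : Finset (Finset ℕ), ∃ q, q ∈ Piv V ∧ β q ∉ SPAN F := by
    intro F
    have himg : ((fun q => β q) '' (Piv V)).Infinite :=
      Set.Infinite.image (fun q hq q' hq' h => hβdistinct q hq q' hq' h) hPinf
    obtain ⟨b, hb, hbF⟩ := himg.exists_notMem_finset (SPAN F)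
    obtain ⟨q, hq, rfl⟩ := hb
    exact ⟨q, hq, hbF⟩
  choose step hstep1 hstep2 using hstep
  set Sseq : ℕ → Finset (Finset ℕ) :=
    fun k => Nat.rec ∅ (fun _ Sk => insert (β (step Sk)) Sk) k with hSseq
  set m : ℕ → ℕ := fun k => step (Sseq k) with hm
  have hSseq_succ : ∀ k, Sseq (k + 1) = insert (β (m k)) (Sseq k) := fun k => rfl
  have hm_piv : ∀ k, m k ∈ Piv V := fun k => hstep1 (Sseq k)
  have hm_not : ∀ k, β (m k) ∉ SPAN (Sseq k) := fun k => hstep2 (Sseq k)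
  have hSmem : ∀ j k, j < k → β (m j) ∈ Sseq k := by
    intro j k
    induction k with
    | zero => omega
    | succ k ih =>
      intro hjk
      rw [hSseq_succ]
      rcases Nat.lt_succ_iff_lt_or_eq.1 hjk with h | h
      · exact Finset.mem_insert_of_mem (ih h)
      · subst h; exact Finset.mem_insert_self _ _
  have hm_lt_ne : ∀ j j', j < j' → β (m j) ≠ β (m j') := by
    intro j j' hjj h
    exact hm_not j' (h ▸ hmem_span _ _ (hSmem j j' hjj))
  have hβm_inj : Function.Injective (fun k => β (m k)) := by
    intro j j' h
    by_contra hne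
    rcases Nat.lt_or_ge j j' with hlt | hge
    · exact hm_lt_ne j j' hlt h
    · have hlt : j' < j := by omega
      exact hm_lt_ne j' j hlt h.symm
  have hm_inj : Function.Injective m := by
    intro j j' h
    exact hβm_inj (by simp only [h])
  have h_greedy : ∀ K : Finset ℕ, K.Nonempty → fd (fun k => β (m k)) K ≠ ∅ := by
    intro K hK h0
    set k' := K.max' hK with hk'
    have hk'mem : k' ∈ K := Finset.max'_mem K hK
    have hsplit : K = insert k' (K.erase k') := (Finset.insert_erase hk'mem).symm
    rw [hsplit, fd_insert (Finset.notMem_erase k' K)] at h0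
    have heq : β (m k') = fd (fun k => β (m k)) (K.erase k') := by
      have := symmDiff_eq_bot.1 (by rw [Finset.bot_eq_empty]; exact h0 :
        (β (m k') ∆ fd (fun k => β (m k)) (K.erase k')) = ⊥)
      exact this
    have himg : fd (fun k => β (m k)) (K.erase k') =
        fd (id : Finset ℕ → Finset ℕ) ((K.erase k').image (fun k => β (m k))) := by
      rw [fd_image (fun a _ b _ hab => hβm_inj hab)]
      rfl
    have hsub : (K.erase k').image (fun k => β (m k)) ⊆ Sseq k' := by
      intro t ht
      obtain ⟨j, hj, rfl⟩ := Finset.mem_image.1 ht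
      have hjlt : j < k' := by
        have h1 : j ≤ k' := Finset.le_max' K j (Finset.mem_of_mem_erase hj)
        have h2 : j ≠ k' := Finset.ne_of_mem_erase hj
        omega
      exact hSmem j k' hjlt
    apply hm_not k'
    rw [heq, himg]
    exact Finset.mem_image.2 ⟨_, Finset.mem_powerset.2 hsub, rfl⟩
  -- Step 7: assemble the witness
  have hPset : ({n : ℕ | n ∈ Piv V} : Set ℕ).Infinite := by
    rwa [Set.setOf_mem_eq]
  set nth : ℕ → ℕ := Nat.nth (· ∈ Piv V) with hnth
  have hnth_mem : ∀ n, nth n ∈ Piv V := fun n => Nat.nth_mem_of_infinite hPset n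
  have hnth_inj : Function.Injective nth := Nat.nth_injective hPset
  have hnth_range : Set.range nth = Piv V := by
    rw [hnth, Nat.range_nth_of_infinite hPset, Set.setOf_mem_eq]
  set y : ℕ → Finset ℕ := fun n => fd z (α (nth n)) with hy
  set x : ℕ → Finset ℕ := fun n => if Even n then y (n / 2) else z (m (n / 2)) with hx
  set g : ℕ → ℕ := fun n => 2 * n with hg
  have hgmono : StrictMono g := fun a b h => by simp only [hg]; omega
  have hxg : x ∘ g = y := by
    funext n
    simp only [hx, hg, Function.comp_apply]
    rw [if_pos (even_two_mul n)]
    congr 1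
    omega
  refine ⟨x, g, hgmono, ?_, ?_, ?_⟩
  · -- infinitely many dropped values
    rw [hxg]
    apply Set.infinite_of_injective_forall_mem (f := fun k => z (m k))
    · intro k k' h
      simp only at h
      have h1 : fd z {m k} = fd z {m k'} := by rw [fd_singleton, fd_singleton]; exact h
      have h2 : ({m k} : Finset ℕ) = {m k'} := fdz_inj hEmp h1
      exact hm_inj (Finset.singleton_injective h2)
    · intro k
      constructor
      · -- z (m k) ∈ range x
        refine ⟨2 * k + 1, ?_⟩
        show x (2 * k + 1) = z (m k)
        simp only [hx]
        have hodd : ¬ Even (2 * k + 1) := by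
          rw [Nat.even_add_one]
          exact not_not_intro (even_two_mul k)
        rw [if_neg hodd]
        have hdiv : (2 * k + 1) / 2 = k := by omega
        rw [hdiv]
      · -- z (m k) ∉ range y
        rintro ⟨n, hn⟩
        simp only [hy] at hn
        have h1 : fd z (α (nth n)) = fd z {m k} := by rw [fd_singleton]; exact hn
        have h2 : α (nth n) = {m k} := fdz_inj hEmp h1
        have h3 := hα3 (nth n) (hnth_mem n)
        rw [h2, Finset.card_singleton] at h3
        omega
  · -- FDseq x ⊆ A
    rintro s ⟨a, ha, rfl⟩
    show fd x a ∈ A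
    have hxsupp : ∀ n, x n = fd z (if Even n then α (nth (n / 2)) else {m (n / 2)}) := by
      intro n
      simp only [hx]
      by_cases hn : Even n
      · rw [if_pos hn, if_pos hn]
      · rw [if_neg hn, if_neg hn, fd_singleton]
    set supp : ℕ → Finset ℕ := fun n => if Even n then α (nth (n / 2)) else {m (n / 2)}
      with hsupp
    have hfda : fd x a = fd z (fd supp a) := fd_comp (fun i _ => hxsupp i)
    have hvne : fd supp a ≠ ∅ := by
      intro hv0
      set ae := a.filter (fun n => Even n) with hae
      set ao := a.filter (fun n => ¬ Even n) with hao
      have hsplit : ae ∪ ao = a := Finset.filter_union_filter_not_eq _ a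
      have hdisj : Disjoint ae ao := Finset.disjoint_filter_filter_not a a _
      have h1 : fd supp a = fd supp ae ∆ fd supp ao := by
        rw [← hsplit] at hv0 ⊢
        exact fd_union_of_disjoint hdisj
      set E := ae.image (fun n => nth (n / 2)) with hE
      set K := ao.image (fun n => n / 2) with hK
      set M := K.image m with hM
      have h2 : fd supp ae = fd α E := by
        have e1 : fd supp ae = fd (fun n => α (nth (n / 2))) ae :=
          Finset.fold_congr (fun n hn => by
            simp only [hsupp]
            exact if_pos (Finset.mem_filter.1 hn).2)
        have e2 : fd α E = fd (fun n => α (nth (n / 2))) ae := by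
          rw [hE, fd_image]
          · rfl
          · intro u1 hu1 v1 hv1 huv
            have h3 := hnth_inj huv
            obtain ⟨cu, hcu⟩ := (Finset.mem_filter.1 hu1).2
            obtain ⟨cv, hcv⟩ := (Finset.mem_filter.1 hv1).2
            omega
        rw [e1, e2]
      have h3 : fd supp ao = M := by
        have e1 : fd supp ao = fd (fun n => ({m (n / 2)} : Finset ℕ)) ao :=
          Finset.fold_congr (fun n hn => by
            simp only [hsupp]
            exact if_neg (Finset.mem_filter.1 hn).2)
        have e2 : fd (fun k => ({m k} : Finset ℕ)) K = fd (fun n => ({m (n / 2)} : Finset ℕ)) ao := by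
          rw [hK, fd_image]
          · rfl
          · intro u1 hu1 v1 hv1 huv
            have hu2 := (Finset.mem_filter.1 hu1).2
            have hv2 := (Finset.mem_filter.1 hv1).2
            rw [Nat.not_even_iff] at hu2 hv2
            omega
        rw [e1, ← e2, hM, fd_singletons hm_inj]
      have hEP : ∀ r ∈ E, r ∈ Piv V := by
        intro r hr
        obtain ⟨n, _, rfl⟩ := Finset.mem_image.1 hr
        exact hnth_mem _
      have hMP : ∀ r ∈ M, r ∈ Piv V := by
        intro r hr
        obtain ⟨k, _, rfl⟩ := Finset.mem_image.1 hr
        exact hm_piv k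
      have heqEM : fd α E = M := by
        rw [h1, h2, h3] at hv0
        exact symmDiff_eq_bot.1 (by rw [Finset.bot_eq_empty]; exact hv0)
      have hparity : ∀ r, r ∈ Piv V → (r ∈ fd α E ↔ r ∈ E) := by
        intro r hr
        rw [mem_fd]
        have hfilter : E.filter (fun q => r ∈ α q) = if r ∈ E then {r} else ∅ := by
          ext q'
          rw [Finset.mem_filter]
          by_cases hrE : r ∈ E
          · rw [if_pos hrE, Finset.mem_singleton]
            constructor
            · rintro ⟨hq', hrα⟩
              exact (hαpiv q' (hEP q' hq') r hrα hr).symm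
            · rintro rfl
              exact ⟨hrE, hαq_mem _ hr⟩
          · rw [if_neg hrE]
            simp only [Finset.notMem_empty, iff_false, not_and]
            intro hq' hrα
            exact hrE ((hαpiv q' (hEP q' hq') r hrα hr) ▸ hq')
        rw [hfilter]
        by_cases hrE : r ∈ E
        · rw [if_pos hrE]
          simpa using hrE
        · rw [if_neg hrE]
          simpa using hrE
      have hEM : E = M := by
        ext r
        constructor
        · intro hrE
          have h4 := (hparity r (hEP r hrE)).2 hrE
          rwa [heqEM] at h4
        · intro hrM
          have h4 : r ∈ fd α E := by rw [heqEM]; exact hrM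
          exact (hparity r (hMP r hrM)).1 h4
      have h5 : fd β E = fd α E ∆ E := by
        have e1 : fd β E = fd (fun q => α q ∆ {q}) E :=
          Finset.fold_congr (fun q hq => hβeq q (hEP q hq))
        rw [e1, fd_ptwise]
        congr 1
        have e2 : fd (fun q => ({q} : Finset ℕ)) E = E.image (fun q => q) :=
          fd_singletons (fun a b h => h) E
        rw [e2, Finset.image_id']
      have h6 : fd β E = ∅ := by
        rw [h5, heqEM, ← hEM, symmDiff_self]
        rfl
      have h7 : fd β E = fd (fun k => β (m k)) K := by
        rw [hEM, hM, fd_image (fun a _ b _ hab => hm_inj hab)]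
        rfl
      have hKempty : K = ∅ := by
        by_contra hKne
        exact h_greedy K (Finset.nonempty_iff_ne_empty.2 hKne) (by rw [← h7, h6])
      have hEempty : E = ∅ := by
        rw [hEM, hM, hKempty]
        rfl
      have hae' : ae = ∅ := by
        by_contra h
        have h8 : E.Nonempty := (Finset.nonempty_iff_ne_empty.2 h).image _
        rw [hEempty] at h8
        exact Finset.not_nonempty_empty h8
      have hao' : ao = ∅ := by
        by_contra h
        have h8 : K.Nonempty := (Finset.nonempty_iff_ne_empty.2 h).image _
        rw [hKempty] at h8
        exact Finset.not_nonempty_empty h8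
      have : a = ∅ := by rw [← hsplit, hae', hao']; rfl
      exact (Finset.nonempty_iff_ne_empty.1 ha) this
    have hmem : fd x a ∈ FDseq z :=
      ⟨fd supp a, Finset.nonempty_iff_ne_empty.2 hvne, hfda.symm⟩
    exact (hzA hmem).1
  · -- FDseq (x ∘ g) ∈ p
    rw [hxg]
    have hsub : FDseq u ⊆ FDseq y := by
      rintro s ⟨a, ha, rfl⟩
      show fd u a ∈ FDseq y
      have h1 : fd u a = fd z (fd d a) := fd_comp (fun i _ => (hd2 i).symm)
      have hvV : fd d a ∈ V := ⟨a, ha, rfl⟩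
      obtain ⟨E, hEne, hEP, hEfd⟩ := hspan _ hvV
      have hinjOn : Set.InjOn nth (nth ⁻¹' ↑E) := hnth_inj.injOn
      set E' := E.preimage nth hinjOn with hE'
      have himg : E'.image nth = E := by
        rw [hE', Finset.image_preimage]
        apply Finset.filter_true_of_mem
        intro r hr
        rw [hnth_range]
        exact hEP (Finset.mem_coe.2 hr)
      have hE'ne : E'.Nonempty := by
        by_contra h
        rw [Finset.not_nonempty_iff_eq_empty] at h
        rw [h, Finset.image_empty] at himg
        rw [← himg] at hEne
        exact Finset.not_nonempty_empty hEne
      refine ⟨E', hE'ne, ?_⟩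
      have h2 : fd y E' = fd z (fd α (E'.image nth)) := by
        have e1 : fd y E' = fd z (fd (fun n => α (nth n)) E') :=
          fd_comp (fun i _ => rfl)
        rw [e1]
        congr 1
        rw [fd_image (fun a1 _ b1 _ hab => hnth_inj hab)]
        rfl
      show fd y E' = fd u a
      rw [h2, himg, hEfd, ← h1]
    exact Filter.mem_of_superset hup hsub
end

section
/- Let p be a weakly summable ultrafilter on an abelian group G of the form G = ⊕_{n<ω} T (or more generally any product-like abelian group with projections π_n). If for some n there is A ∈ p with π_n[A] finite, then {x ∈ G : π_n(x) = 0} ∈ p. -/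
/-!
Choose a sequence whose finite sums all lie in `A` and avoid `{x | x n = 0}`. The `n`-th
coordinates of its partial sums `s₀ + ⋯ + s_m` range over a finite set, so two of them, say for
`i < j`, agree; then the block sum `s_{i+1} + ⋯ + s_j` is again a finite sum of the sequence,
yet its `n`-th coordinate is `0`.
-/

open DirectSum

/-- The set of finite sums of a sequence in an abelian group. -/
def FSseq {G : Type*} [AddCommGroup G] (x : ℕ → G) : Set G :=
  {s | ∃ a : Finset ℕ, a.Nonempty ∧ ∑ k ∈ a, x k = s}

/-- An ultrafilter on an abelian group is weakly summable if every member
contains the set of finite sums of some sequence. -/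
def WeaklySummable {G : Type*} [AddCommGroup G] (p : Ultrafilter G) : Prop :=
  ∀ A ∈ p, ∃ x : ℕ → G, FSseq x ⊆ A

namespace FSseq

variable {G : Type*} [AddCommGroup G]

theorem sum_range_succ_mem (x : ℕ → G) (m : ℕ) :
    ∑ k ∈ Finset.range (m + 1), x k ∈ FSseq x :=
  ⟨Finset.range (m + 1), Finset.nonempty_range_add_one, rfl⟩

theorem sum_range_succ_sub_sum_range_succ_mem (x : ℕ → G) {i j : ℕ} (hij : i < j) :
    ∑ k ∈ Finset.range (j + 1), x k - ∑ k ∈ Finset.range (i + 1), x k ∈ FSseq x := by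
  refine ⟨Finset.Ico (i + 1) (j + 1), Finset.nonempty_Ico.2 (by omega), ?_⟩
  exact Finset.sum_Ico_eq_sub _ (by omega)

theorem exists_mem_map_eq_zero {K : Type*} [AddGroup K] (f : G →+ K) (x : ℕ → G)
    (hfin : (f '' FSseq x).Finite) : ∃ s ∈ FSseq x, f s = 0 := by
  obtain ⟨i, j, hij, heq⟩ := hfin.exists_lt_map_eq_of_forall_mem
    (f := fun m => f (∑ k ∈ Finset.range (m + 1), x k))
    fun m => Set.mem_image_of_mem f (sum_range_succ_mem x m)
  exact ⟨_, sum_range_succ_sub_sum_range_succ_mem x hij, by simp only [map_sub, heq, sub_self]⟩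

end FSseq

theorem WeaklySummable.ker_mem_of_finite_image {G K : Type*} [AddCommGroup G] [AddGroup K]
    {p : Ultrafilter G} (hp : WeaklySummable p) (f : G →+ K) {A : Set G} (hA : A ∈ p)
    (hfin : (f '' A).Finite) : {x | f x = 0} ∈ p := by
  by_contra hker
  have hnonzero : {x | f x = 0}ᶜ ∈ p := Ultrafilter.compl_mem_iff_notMem.2 hker
  obtain ⟨x, hx⟩ := hp _ (Filter.inter_mem hA hnonzero)
  obtain ⟨s, hs, hfs⟩ := FSseq.exists_mem_map_eq_zero f x
    (hfin.subset (Set.image_mono fun _ h => (hx h).1))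
  exact (hx hs).2 hfs

/-- If `p` is a weakly summable ultrafilter on a direct sum `⊕_{n<ω} H n`, and some
member `A ∈ p` has finite image under the `n`-th coordinate projection, then the
set of elements whose `n`-th coordinate vanishes belongs to `p`. -/
theorem weaklySummable_coord_zero_mem (H : ℕ → Type*) [∀ n, AddCommGroup (H n)]
    (p : Ultrafilter (⨁ n, H n)) (hp : WeaklySummable p) (n : ℕ)
    (A : Set (⨁ n, H n)) (hA : A ∈ p)
    (hfin : ((fun x : ⨁ n, H n => x n) '' A).Finite) :
    {x : ⨁ n, H n | x n = 0} ∈ p :=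
  hp.ker_mem_of_finite_image (DFinsupp.evalAddMonoidHom n) hA hfin
end

section
/- If p is a weakly summable ultrafilter on an abelian group G and A ∈ p is such that the image of A under a group homomorphism f : G → H is finite, then {x ∈ G : f(x) = 0} ∈ p. -/
theorem weaklySummable_kernel_mem {G H : Type*} [AddCommGroup G] [AddCommGroup H]
    (p : Ultrafilter G) (hp : WeaklySummable p) (f : G →+ H)
    (A : Set G) (hA : A ∈ p) (hfin : (f '' A).Finite) :
    {x : G | f x = 0} ∈ p := by
  -- Partition A by the (finitely many) values of f; one piece is in p.
  have hcover : A ⊆ ⋃ h ∈ f '' A, {x ∈ A | f x = h} := by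
    intro x hx
    simp only [Set.mem_iUnion, Set.mem_setOf_eq]
    exact ⟨f x, Set.mem_image_of_mem f hx, hx, rfl⟩
  have hU : (⋃ h ∈ f '' A, {x ∈ A | f x = h}) ∈ p :=
    Filter.mem_of_superset hA hcover
  rw [p.finite_biUnion_mem_iff hfin] at hU
  obtain ⟨h, -, hmem⟩ := hU
  obtain ⟨x, hx⟩ := hp _ hmem
  have h0 : f (x 0) = h := (hx ⟨{0}, by simp, by simp⟩).2
  have h1 : f (x 1) = h := (hx ⟨{1}, by simp, by simp⟩).2
  have h01 : f (x 0 + x 1) = h := by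
    have := hx ⟨{0, 1}, by simp, by rw [Finset.sum_pair (by norm_num)]⟩
    exact this.2
  have hzero : h = 0 := by
    have key : f (x 0) + f (x 1) = h := by rw [← map_add]; exact h01
    rw [h0, h1] at key
    exact add_eq_left.mp key
  refine Filter.mem_of_superset hmem ?_
  intro y hy
  simp only [Set.mem_setOf_eq] at hy ⊢
  rw [hy.2, hzero]
end

section
/- Let (t_k) be a sequence of elements of (0, 1/2) ⊂ ℝ such that t_k > 3·∑_{l>k} t_l for every k (with the tail sums convergent). Then for nonempty finite sets a, b ⊆ ℕ and functions ε : a → {1,2}, δ : b → {1,2}, if ∑_{k∈a} ε(k)·t_k = ∑_{k∈b} δ(k)·t_k, then a = b and ε = δ. -/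
/-!
Subtract the two sums: the coefficients of `a ∪ b` in the difference are integers of absolute
value at most `2`. If one of them were nonzero, the first nonzero one would contribute at least
`t m` in absolute value, while all later terms together contribute at most
`2 ∑_{l>m} t l < t m`. So all coefficients vanish, which forces `a = b` and `ε = δ` on `a`.
-/

open Finset

section DominatedSequence

variable {t : ℕ → ℝ}

theorem sum_le_tsum_nat_add_of_lt (ht : ∀ k, 0 ≤ t k) (hsum : Summable t) {m : ℕ}
    {s : Finset ℕ} (hs : ∀ k ∈ s, m < k) :
    ∑ k ∈ s, t k ≤ ∑' l, t (m + 1 + l) := by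
  have hinj : Set.InjOn (m + 1 + ·) ((m + 1 + ·) ⁻¹' ↑s) := fun _ _ _ _ h => by simpa using h
  have hrange : ∀ k ∈ s, k ∉ Set.range (m + 1 + ·) → t k = 0 := fun k hk hkr =>
    absurd ⟨k - (m + 1), show m + 1 + (k - (m + 1)) = k by have := hs k hk; omega⟩ hkr
  have htail : Summable fun l => t (m + 1 + l) := by
    simpa only [add_comm (m + 1)] using (summable_nat_add_iff (m + 1)).2 hsum
  rw [← sum_preimage _ s hinj t hrange]
  exact htail.sum_le_tsum _ fun l _ => ht _

theorem abs_sum_mul_le_mul_tsum_nat_add (ht : ∀ k, 0 ≤ t k) (hsum : Summable t) {m : ℕ}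
    {s : Finset ℕ} (hs : ∀ k ∈ s, m < k) {f : ℕ → ℝ} {N : ℝ} (hN : 0 ≤ N)
    (hf : ∀ k ∈ s, |f k| ≤ N) :
    |∑ k ∈ s, f k * t k| ≤ N * ∑' l, t (m + 1 + l) :=
  calc |∑ k ∈ s, f k * t k|
      ≤ ∑ k ∈ s, |f k| * t k := by
        simpa only [abs_mul, abs_of_nonneg (ht _)] using abs_sum_le_sum_abs (fun k => f k * t k) s
    _ ≤ ∑ k ∈ s, N * t k := sum_le_sum fun k hk => mul_le_mul_of_nonneg_right (hf k hk) (ht k)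
    _ ≤ N * ∑' l, t (m + 1 + l) := by
        rw [← mul_sum]
        exact mul_le_mul_of_nonneg_left (sum_le_tsum_nat_add_of_lt ht hsum hs) hN

theorem eq_zero_of_sum_intCast_mul_eq_zero (ht : ∀ k, 0 ≤ t k) (hsum : Summable t) {N : ℝ}
    (hdom : ∀ k, N * ∑' l, t (k + 1 + l) < t k) {s : Finset ℕ} {d : ℕ → ℤ}
    (hd : ∀ k ∈ s, |(d k : ℝ)| ≤ N) (h : ∑ k ∈ s, (d k : ℝ) * t k = 0) :
    ∀ k ∈ s, d k = 0 := by
  by_contra! hne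
  obtain ⟨m, hm, hmin⟩ := (s.filter fun k => d k ≠ 0).exists_min_image id
    (by simpa [Finset.Nonempty] using hne)
  simp only [mem_filter, id] at hm hmin
  have hrest : ∑ k ∈ s.erase m, (d k : ℝ) * t k
      = ∑ k ∈ (s.erase m).filter (m < ·), (d k : ℝ) * t k := by
    refine (sum_filter_of_ne fun k hk hk0 => ?_).symm
    have hdk : d k ≠ 0 := by rintro hzero; simp [hzero] at hk0
    exact lt_of_le_of_ne (hmin k ⟨mem_of_mem_erase hk, hdk⟩) (ne_of_mem_erase hk).symm
  have hrest_le : |∑ k ∈ s.erase m, (d k : ℝ) * t k| ≤ N * ∑' l, t (m + 1 + l) := by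
    rw [hrest]
    exact abs_sum_mul_le_mul_tsum_nat_add ht hsum (fun k hk => (mem_filter.1 hk).2)
      ((abs_nonneg _).trans (hd m hm.1))
      fun k hk => hd k (mem_of_mem_erase (mem_filter.1 hk).1)
  have hlead : t m ≤ |(d m : ℝ) * t m| := by
    rw [abs_mul, abs_of_nonneg (ht m)]
    exact le_mul_of_one_le_left (ht m) (by exact_mod_cast Int.one_le_abs hm.2)
  rw [← add_sum_erase s _ hm.1, add_eq_zero_iff_eq_neg] at h
  rw [h, abs_neg] at hlead
  linarith [hdom m]

end DominatedSequence

theorem coeff_sums_unique_general (t : ℕ → ℝ) (ht : ∀ k, t k ∈ Set.Ioo (0 : ℝ) (1 / 2))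
    (hsum : Summable t) (hdom : ∀ k, t k > 3 * ∑' l : ℕ, t (k + 1 + l))
    (a b : Finset ℕ)
    (ε δ : ℕ → ℕ) (hε : ∀ k ∈ a, ε k = 1 ∨ ε k = 2) (hδ : ∀ k ∈ b, δ k = 1 ∨ δ k = 2)
    (heq : ∑ k ∈ a, (ε k : ℝ) * t k = ∑ k ∈ b, (δ k : ℝ) * t k) :
    a = b ∧ ∀ k ∈ a, ε k = δ k := by
  classical
  have ht0 k : 0 ≤ t k := (ht k).1.le
  have hdom2 k : 2 * ∑' l, t (k + 1 + l) < t k := by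
    have : 0 ≤ ∑' l, t (k + 1 + l) := tsum_nonneg fun l => ht0 (k + 1 + l)
    linarith [hdom k]
  set d : ℕ → ℤ := fun k => (if k ∈ a then ε k else 0) - if k ∈ b then δ k else 0
  have hd k (_ : k ∈ a ∪ b) : |(d k : ℝ)| ≤ 2 := by
    have : |d k| ≤ 2 := by grind [abs_le]
    exact_mod_cast this
  have hsum0 : ∑ k ∈ a ∪ b, (d k : ℝ) * t k = 0 := by
    simp [d, sub_mul, sum_sub_distrib, ite_mul, heq]
  have hmem k (hk : k ∈ a ∪ b) : k ∈ a ∧ k ∈ b ∧ ε k = δ k := by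
    have := eq_zero_of_sum_intCast_mul_eq_zero ht0 hsum hdom2 hd hsum0 k hk
    grind
  exact ⟨Subset.antisymm (fun k hk => (hmem k (mem_union_left b hk)).2.1)
      fun k hk => (hmem k (mem_union_right a hk)).1,
    fun k hk => (hmem k (mem_union_left b hk)).2.2⟩

/-- If `(t k)` is a sequence of reals in `(0, 1/2)` with `t k > 3 ∑_{l>k} t l`
for all `k`, then sums `∑_{k∈a} ε k • t k` with coefficients in `{1,2}` over
nonempty finite index sets determine both the index set and the coefficients. -/
theorem coeff_sums_unique (t : ℕ → ℝ) (ht : ∀ k, t k ∈ Set.Ioo (0 : ℝ) (1 / 2))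
    (hsum : Summable t) (hdom : ∀ k, t k > 3 * ∑' l : ℕ, t (k + 1 + l))
    (a b : Finset ℕ) (ha : a.Nonempty) (hb : b.Nonempty)
    (ε δ : ℕ → ℕ) (hε : ∀ k ∈ a, ε k = 1 ∨ ε k = 2) (hδ : ∀ k ∈ b, δ k = 1 ∨ δ k = 2)
    (heq : ∑ k ∈ a, (ε k : ℝ) * t k = ∑ k ∈ b, (δ k : ℝ) * t k) :
    a = b ∧ ∀ k ∈ a, ε k = δ k :=
  coeff_sums_unique_general t ht hsum hdom a b ε δ hε hδ heq
end
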